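/- Let v : [0,∞) → X be continuously differentiable with v(0) = v₀ and v′(τ) = −g(v(τ))·(v(τ) − p) for all τ ≥ 0, and set θ(τ) = exp(−∫₀^τ g(v(σ)) dσ) with limit θ̄ = lim_{τ→∞} θ(τ). Then θ̄ ∈ (0,1] if and only if ∫₀^∞ g(v(σ)) dσ < ∞; moreover, in that case v(τ) converges in X, as τ → ∞, to v̄ = θ̄·v₀ + (1 − θ̄)·p, and g(v̄) = 0. -/

import Mathlib

open Set Filter Topology MeasureTheory intervalIntegral

/-!
With `G τ = ∫₀^τ g (v σ) dσ`, the integrating factor `exp G` makes `exp (G τ) • (v τ - p)`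
constant, so `v τ = θ τ • (v₀ - p) + p`. As `g ≥ 0` and `G' = g ∘ v`, the integral
`∫₀^∞ g (v σ) dσ` is finite iff `G` converges, iff `θ = exp (-G)` has a positive limit.
In that case `v → v̄`, hence `g (v τ) → g v̄`, and an integrable function with a limit at
infinity must have limit `0`.
-/

theorem ContinuousOn.hasDerivWithinAt_integral_Ici {E : Type*} [NormedAddCommGroup E]
    [NormedSpace ℝ E] [CompleteSpace E] {f : ℝ → E} {a x : ℝ} (hf : ContinuousOn f (Ici a))
    (hx : a ≤ x) :
    HasDerivWithinAt (fun t => ∫ s in a..t, f s) (f x) (Ici a) x := by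
  have hint : IntervalIntegrable f volume a x :=
    (hf.mono Icc_subset_Ici_self).intervalIntegrable_of_Icc hx
  have hmeas : StronglyMeasurableAtFilter f (𝓝[Ici a] x) :=
    hf.stronglyMeasurableAtFilter_nhdsWithin measurableSet_Ici x
  rcases hx.eq_or_lt with rfl | hx
  · exact integral_hasDerivWithinAt_right hint
      (hmeas.filter_mono (nhdsWithin_mono _ Ioi_subset_Ici_self))
      ((hf a self_mem_Ici).mono Ioi_subset_Ici_self)
  · have hnhds : Ici a ∈ 𝓝 x := Ici_mem_nhds hx
    rw [nhdsWithin_eq_nhds.2 hnhds] at hmeas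
    exact (integral_hasDerivAt_right hint hmeas
      ((hf x hx.le).continuousAt hnhds)).hasDerivWithinAt

theorem Convex.sub_eq_exp_smul_of_hasDerivWithinAt {E : Type*} [NormedAddCommGroup E]
    [NormedSpace ℝ E] {s : Set ℝ} (hs : Convex ℝ s) {v : ℝ → E} {G k : ℝ → ℝ} {p : E}
    (hG : ∀ t ∈ s, HasDerivWithinAt G (k t) s t)
    (hv : ∀ t ∈ s, HasDerivWithinAt v (-k t • (v t - p)) s t) {a t : ℝ} (ha : a ∈ s)
    (ht : t ∈ s) : v t - p = Real.exp (G a - G t) • (v a - p) := by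
  have hconst : ∀ τ ∈ s, HasDerivWithinAt (fun τ => Real.exp (G τ) • (v τ - p)) 0 s τ := by
    intro τ hτ
    refine ((hG τ hτ).exp.smul ((hv τ hτ).sub_const p)).congr_deriv ?_
    module
  have heq := hs.norm_image_sub_le_of_norm_hasDerivWithin_le hconst (C := 0) (by simp) ha ht
  rw [zero_mul, norm_le_zero_iff, sub_eq_zero] at heq
  rw [Real.exp_sub, div_eq_inv_mul, mul_smul, ← heq, ← mul_smul,
    inv_mul_cancel₀ (Real.exp_pos _).ne', one_smul]

theorem integrableOn_Ioi_iff_exists_tendsto_integral {f : ℝ → ℝ} {a : ℝ}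
    (hf : ContinuousOn f (Ici a)) (hf0 : ∀ x ∈ Ioi a, 0 ≤ f x) :
    IntegrableOn f (Ioi a) ↔ ∃ l, Tendsto (fun t => ∫ s in a..t, f s) atTop (𝓝 l) := by
  refine ⟨fun hi => ⟨_, intervalIntegral_tendsto_integral_Ioi a hi tendsto_id⟩, ?_⟩
  rintro ⟨l, hl⟩
  have hderiv (x : ℝ) (hx : a ≤ x) := hf.hasDerivWithinAt_integral_Ici hx
  exact integrableOn_Ioi_deriv_of_nonneg (hderiv a le_rfl).continuousWithinAt
    (fun x hx => (hderiv x hx.out.le).hasDerivAt (Ici_mem_nhds hx)) hf0 hl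

theorem pos_iff_exists_tendsto_of_tendsto_exp_neg {α : Type*} {F : Filter α} [F.NeBot]
    {G : α → ℝ} {L : ℝ} (hL : Tendsto (fun t => Real.exp (-G t)) F (𝓝 L)) :
    0 < L ↔ ∃ l, Tendsto G F (𝓝 l) := by
  constructor
  · intro hpos
    refine ⟨-Real.log L, ?_⟩
    simpa using ((Real.continuousAt_log hpos.ne').tendsto.comp hL).neg
  · rintro ⟨l, hl⟩
    rw [tendsto_nhds_unique hL ((Real.continuous_exp.tendsto _).comp hl.neg)]
    exact Real.exp_pos _

theorem eq_zero_of_integrableOn_Ici_of_tendsto {E : Type*} [NormedAddCommGroup E]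
    {f : ℝ → E} {a : ℝ} {c : E} (hf : IntegrableOn f (Ici a))
    (hc : Tendsto f atTop (𝓝 c)) : c = 0 := by
  by_contra hne
  have hc2 : 0 < ‖c‖ / 2 := by positivity
  obtain ⟨b, hb⟩ := eventually_atTop.1
    ((hc.norm.eventually (eventually_ge_nhds (half_lt_self (norm_pos_iff.2 hne)))))
  have : IntegrableOn (fun _ => ‖c‖ / 2) (Ici (max a b)) := by
    refine ((hf.mono_set (Ici_subset_Ici.2 (le_max_left a b))).norm).mono'
      aestronglyMeasurable_const ?_
    filter_upwards [self_mem_ae_restrict measurableSet_Ici] with x hx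
    simpa [abs_of_pos hc2] using hb x ((le_max_right a b).trans hx)
  simp [Real.volume_Ici, hc2.ne'] at this

theorem theta_bar_positive_iff_general
    {X : Type*} [NormedAddCommGroup X] [NormedSpace ℝ X]
    (g : X → ℝ) (hg_cont : Continuous g) (hg_nonneg : ∀ x, 0 ≤ g x)
    (p v₀ : X) (v : ℝ → X) (hv0 : v 0 = v₀)
    (hv' : ∀ τ ∈ Set.Ici (0:ℝ),
      HasDerivWithinAt v ((-(g (v τ))) • (v τ - p)) (Set.Ici 0) τ)
    (θ : ℝ → ℝ)
    (hθ : ∀ τ, θ τ = Real.exp (-(∫ σ in (0:ℝ)..τ, g (v σ))))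
    (θbar : ℝ) (hlim : Filter.Tendsto θ Filter.atTop (nhds θbar)) :
    (θbar ∈ Set.Ioc (0:ℝ) 1 ↔
      MeasureTheory.IntegrableOn (fun σ => g (v σ)) (Set.Ici 0)) ∧
    (θbar ∈ Set.Ioc (0:ℝ) 1 →
      Filter.Tendsto v Filter.atTop (nhds (θbar • v₀ + (1 - θbar) • p)) ∧
      g (θbar • v₀ + (1 - θbar) • p) = 0) := by
  have hgv : ContinuousOn (fun σ => g (v σ)) (Ici 0) :=
    hg_cont.comp_continuousOn fun τ hτ => (hv' τ hτ).continuousWithinAt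
  have hθlim : Tendsto (fun τ => Real.exp (-∫ σ in (0:ℝ)..τ, g (v σ))) atTop (𝓝 θbar) :=
    funext hθ ▸ hlim
  have hpos : 0 < θbar ↔ IntegrableOn (fun σ => g (v σ)) (Ici 0) := by
    rw [pos_iff_exists_tendsto_of_tendsto_exp_neg hθlim, integrableOn_Ici_iff_integrableOn_Ioi,
      integrableOn_Ioi_iff_exists_tendsto_integral hgv fun x _ => hg_nonneg _]
  have hle : θbar ≤ 1 := by
    refine le_of_tendsto hθlim (eventually_atTop.2 ⟨0, fun τ hτ => ?_⟩)
    exact Real.exp_le_one_iff.2 (neg_nonpos.2 (integral_nonneg hτ fun _ _ => hg_nonneg _))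
  have hv_eq : ∀ τ ∈ Ici (0:ℝ), θ τ • (v₀ - p) + p = v τ := by
    intro τ hτ
    have hsol := (convex_Ici 0).sub_eq_exp_smul_of_hasDerivWithinAt
      (fun _ ht => hgv.hasDerivWithinAt_integral_Ici ht) hv' self_mem_Ici hτ
    rw [integral_same, zero_sub, hv0, ← hθ] at hsol
    rw [← hsol, sub_add_cancel]
  have hv_lim : Tendsto v atTop (𝓝 (θbar • v₀ + (1 - θbar) • p)) := by
    have : θbar • (v₀ - p) + p = θbar • v₀ + (1 - θbar) • p := by module
    rw [← this]
    exact ((hlim.smul_const _).add_const p).congr' (eventually_atTop.2 ⟨0, hv_eq⟩)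
  exact ⟨⟨fun h => hpos.1 h.1, fun h => ⟨hpos.2 h, hle⟩⟩, fun h => ⟨hv_lim,
    eq_zero_of_integrableOn_Ici_of_tendsto (hpos.1 h.1) ((hg_cont.tendsto _).comp hv_lim)⟩⟩

/-- For a solution of the abstract determining form `dv/dτ = -g(v)(v - p)` with
characteristic determining parameter `θ(τ) = exp(-∫₀^τ g(v(σ)) dσ)` having limit `θ̄`:
`θ̄ ∈ (0,1]` if and only if `∫₀^∞ g(v(σ)) dσ < ∞`; moreover, in that case
`v(τ) → v̄ = θ̄·v₀ + (1-θ̄)·p` and `g(v̄) = 0`. -/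
theorem theta_bar_positive_iff
    {X : Type*} [NormedAddCommGroup X] [NormedSpace ℝ X] [CompleteSpace X]
    (g : X → ℝ) (hg_cont : Continuous g) (hg_nonneg : ∀ x, 0 ≤ g x)
    (p v₀ : X) (v : ℝ → X) (hv0 : v 0 = v₀)
    (hv' : ∀ τ ∈ Set.Ici (0:ℝ),
      HasDerivWithinAt v ((-(g (v τ))) • (v τ - p)) (Set.Ici 0) τ)
    (θ : ℝ → ℝ)
    (hθ : ∀ τ, θ τ = Real.exp (-(∫ σ in (0:ℝ)..τ, g (v σ))))
    (θbar : ℝ) (hlim : Filter.Tendsto θ Filter.atTop (nhds θbar)) :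
    (θbar ∈ Set.Ioc (0:ℝ) 1 ↔
      MeasureTheory.IntegrableOn (fun σ => g (v σ)) (Set.Ici 0)) ∧
    (θbar ∈ Set.Ioc (0:ℝ) 1 →
      Filter.Tendsto v Filter.atTop (nhds (θbar • v₀ + (1 - θbar) • p)) ∧
      g (θbar • v₀ + (1 - θbar) • p) = 0) :=
  theta_bar_positive_iff_general g hg_cont hg_nonneg p v₀ v hv0 hv' θ hθ θbar hlim
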